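/- Let δ ∈ ℂ with δ ≠ 0, and let L be a complex vector space equipped with a commutative associative bilinear multiplication · and a Lie bracket [-,-]. Then (L, ·, [-,-]) is simultaneously a δ-Poisson algebra and a transposed δ-Poisson algebra if and only if x·[y,z] = 0 and [x·y, z] = 0 for all x, y, z ∈ L. -/

import Mathlib

/-!
Antisymmetry of the bracket lets one rewrite both brackets in the transposed identity with the
δ-Poisson (Leibniz) rule; after cancelling δ this gives `x·[y,z] = y·[x,z] + z·[x,y]`. Fed back
into the Leibniz rule, that identity turns it into `[x, y·z] = δ x·[y,z]`, and substituting this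
into the transposed identity once more yields `2δ z·[x,y] = 0`. Hence `L·[L,L] = 0`, and then
`[L·L, L] = δ L·[L,L] = 0`. The converse is immediate.
-/

/-- A Lie bracket (bilinear, alternating, satisfying the Jacobi identity)
on a complex vector space. -/
structure LieBracketOn (L : Type*) [AddCommGroup L] [Module ℂ L] where
  br : L → L → L
  add_left : ∀ x y z, br (x + y) z = br x z + br y z
  smul_left : ∀ (c : ℂ) (x y : L), br (c • x) y = c • br x y
  add_right : ∀ x y z, br x (y + z) = br x y + br x z
  smul_right : ∀ (c : ℂ) (x y : L), br x (c • y) = c • br x y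
  alt : ∀ x, br x x = 0
  jacobi : ∀ x y z, br (br x y) z + br (br y z) x + br (br z x) y = 0

theorem LieBracketOn.br_skew {L : Type*} [AddCommGroup L] [Module ℂ L] (B : LieBracketOn L)
    (x y : L) : -B.br y x = B.br x y := by
  have h := B.alt (x + y)
  rw [B.add_left, B.add_right, B.add_right, B.alt, B.alt, zero_add, add_zero] at h
  exact neg_eq_of_add_eq_zero_left h

section DeltaPoisson

variable {K L : Type*} [Field K] [AddCommGroup L] [Module K L]
  (mul br : L → L → L) (δ : K)

def IsDeltaPoisson : Prop :=
  ∀ x y z, br x (mul y z) = δ • (mul (br x y) z + mul y (br x z))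

def IsTransposedDeltaPoisson : Prop :=
  ∀ x y z, δ • mul z (br x y) = br (mul z x) y + br x (mul z y)

variable {mul br δ}

theorem mul_br_eq_add_of_isDeltaPoisson_of_isTransposedDeltaPoisson
    (mul_comm : ∀ x y, mul x y = mul y x) (mul_neg : ∀ x y, mul x (-y) = -mul x y)
    (br_skew : ∀ x y, -br y x = br x y) (hδ : δ ≠ 0)
    (hP : IsDeltaPoisson mul br δ) (hT : IsTransposedDeltaPoisson mul br δ) (x y z : L) :
    mul x (br y z) = mul y (br x z) + mul z (br x y) := by
  refine smul_right_injective L hδ ?_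
  have h := hT x y z
  rw [← br_skew (mul z x) y, hP y z x, hP x z y, ← br_skew y x, mul_neg,
    mul_comm (br y z), mul_comm (br x z)] at h
  show δ • _ = δ • _
  linear_combination (norm := module) h

theorem br_mul_eq_smul_mul_br_of_isDeltaPoisson (mul_comm : ∀ x y, mul x y = mul y x)
    (hP : IsDeltaPoisson mul br δ)
    (h : ∀ x y z, mul x (br y z) = mul y (br x z) + mul z (br x y)) (x y z : L) :
    br x (mul y z) = δ • mul x (br y z) := by
  rw [hP, h x y z, mul_comm (br x y), add_comm]

theorem mul_br_eq_zero_of_isDeltaPoisson_of_isTransposedDeltaPoisson (h2 : (2 : K) ≠ 0)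
    (mul_comm : ∀ x y, mul x y = mul y x) (mul_neg : ∀ x y, mul x (-y) = -mul x y)
    (br_skew : ∀ x y, -br y x = br x y) (hδ : δ ≠ 0)
    (hP : IsDeltaPoisson mul br δ) (hT : IsTransposedDeltaPoisson mul br δ) (x y z : L) :
    mul z (br x y) = 0 := by
  have hsum := mul_br_eq_add_of_isDeltaPoisson_of_isTransposedDeltaPoisson mul_comm mul_neg
    br_skew hδ hP hT
  have hA := br_mul_eq_smul_mul_br_of_isDeltaPoisson mul_comm hP hsum
  have h := hT x y z
  rw [← br_skew (mul z x) y, hA y z x, hA x z y, ← br_skew z x, ← br_skew z y, mul_neg,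
    mul_neg, hsum x y z] at h
  have h2δ : (2 * δ) • mul z (br x y) = 0 := by linear_combination (norm := module) h
  exact (smul_eq_zero.1 h2δ).resolve_left (mul_ne_zero h2 hδ)

theorem isDeltaPoisson_and_isTransposedDeltaPoisson_iff (h2 : (2 : K) ≠ 0)
    (mul_comm : ∀ x y, mul x y = mul y x) (mul_neg : ∀ x y, mul x (-y) = -mul x y)
    (br_skew : ∀ x y, -br y x = br x y) (hδ : δ ≠ 0) :
    IsDeltaPoisson mul br δ ∧ IsTransposedDeltaPoisson mul br δ ↔
      ∀ x y z, mul x (br y z) = 0 ∧ br (mul x y) z = 0 := by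
  constructor
  · rintro ⟨hP, hT⟩ x y z
    have hA := br_mul_eq_smul_mul_br_of_isDeltaPoisson mul_comm hP <|
      mul_br_eq_add_of_isDeltaPoisson_of_isTransposedDeltaPoisson mul_comm mul_neg br_skew hδ hP hT
    have h0 := mul_br_eq_zero_of_isDeltaPoisson_of_isTransposedDeltaPoisson h2 mul_comm mul_neg
      br_skew hδ hP hT
    refine ⟨h0 y z x, ?_⟩
    rw [← br_skew, hA, h0, smul_zero, neg_zero]
  · intro h
    have br_mul : ∀ x y z, br x (mul y z) = 0 := fun x y z => by
      rw [← br_skew, (h y z x).2, neg_zero]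
    refine ⟨fun x y z => ?_, fun x y z => ?_⟩
    · rw [br_mul, mul_comm, (h z x y).1, (h y x z).1, add_zero, smul_zero]
    · rw [(h z x y).1, (h z x y).2, br_mul, add_zero, smul_zero]

end DeltaPoisson

theorem stmt_0_general {L : Type*} [AddCommGroup L] [Module ℂ L]
    (mul : L → L → L)
    (mul_add_right : ∀ x y z, mul x (y + z) = mul x y + mul x z)
    (mul_comm : ∀ x y, mul x y = mul y x)
    (B : LieBracketOn L) (δ : ℂ) (hδ : δ ≠ 0) :
    ((∀ x y z, B.br x (mul y z) = δ • (mul (B.br x y) z + mul y (B.br x z))) ∧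
      (∀ x y z, δ • mul z (B.br x y) = B.br (mul z x) y + B.br x (mul z y)))
      ↔ (∀ x y z, mul x (B.br y z) = 0 ∧ B.br (mul x y) z = 0) := by
  have mul_neg : ∀ x y, mul x (-y) = -mul x y := fun x =>
    map_neg (AddMonoidHom.mk' (mul x) (mul_add_right x))
  exact isDeltaPoisson_and_isTransposedDeltaPoisson_iff two_ne_zero mul_comm mul_neg B.br_skew hδ

/-- for `δ ≠ 0`, a commutative associative product and a Lie
bracket form simultaneously a `δ`-Poisson and a transposed `δ`-Poisson algebra
iff `x·[y,z] = 0` and `[x·y, z] = 0` for all `x, y, z`. -/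
theorem stmt_0 {L : Type*} [AddCommGroup L] [Module ℂ L]
    (mul : L → L → L)
    (mul_add_left : ∀ x y z, mul (x + y) z = mul x z + mul y z)
    (mul_smul_left : ∀ (c : ℂ) (x y : L), mul (c • x) y = c • mul x y)
    (mul_add_right : ∀ x y z, mul x (y + z) = mul x y + mul x z)
    (mul_smul_right : ∀ (c : ℂ) (x y : L), mul x (c • y) = c • mul x y)
    (mul_comm : ∀ x y, mul x y = mul y x)
    (mul_assoc : ∀ x y z, mul (mul x y) z = mul x (mul y z))
    (B : LieBracketOn L) (δ : ℂ) (hδ : δ ≠ 0) :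
    ((∀ x y z, B.br x (mul y z) = δ • (mul (B.br x y) z + mul y (B.br x z))) ∧
      (∀ x y z, δ • mul z (B.br x y) = B.br (mul z x) y + B.br x (mul z y)))
      ↔ (∀ x y z, mul x (B.br y z) = 0 ∧ B.br (mul x y) z = 0) :=
  stmt_0_general mul mul_add_right mul_comm B δ hδ
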